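/- arXiv:2311.09482 — 4 statements merged into one kernel-verified Lean document; each statement's English description precedes it below -/
import Mathlib

section
/- Let $R^{(0)},R^{(1)},\dots,R^{(K)}$ be exchangeable real-valued random variables (in particular, i.i.d.), and let $\delta\in(0,1)$ with $(K+1)(1-\delta)\le K$. Define $C := \mathrm{Quantile}_{(1+1/K)(1-\delta)}(R^{(1)},\dots,R^{(K)})$, the $1/K$-corrected empirical quantile of the calibration scores. Then $\mathrm{Prob}(R^{(0)}\le C)\ge 1-\delta$. -/
/-!
Let `m = ⌈(K+1)(1-δ)⌉`. Among any `K+1` reals at least `m` have fewer than `m` entries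
strictly below them, so the events "`R⁽ʲ⁾` has fewer than `m` scores strictly below it" cover
every outcome at least `m` times. By exchangeability they all have the probability of the event
for `j = 0`, which is therefore at least `m/(K+1) ≥ 1-δ`. On that event fewer than `m`
calibration scores lie below `R⁽⁰⁾`, while the `1/K`-corrected quantile is the least `z` with
at least `m` calibration scores `≤ z`; hence `R⁽⁰⁾ ≤ C`.
-/

open MeasureTheory ProbabilityTheory Finset
open scoped ENNReal

section CountBelow

variable {ι α : Type*} [Fintype ι] [LinearOrder α]

def countBelow (x : ι → α) (a : α) : ℕ := #{i | x i < a}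

lemma countBelow_comp_perm (x : ι → α) (σ : Equiv.Perm ι) (a : α) :
    countBelow (x ∘ σ) a = countBelow x a :=
  card_equiv σ (by simp)

lemma countBelow_fin_succ {K : ℕ} (x : Fin (K + 1) → α) :
    countBelow x (x 0) = countBelow (x ∘ Fin.succ) (x 0) := by
  simp [countBelow, Fin.card_filter_univ_succ]

lemma le_card_countBelow_lt (x : ι → α) {m : ℕ} (hm : m ≤ Fintype.card ι) :
    m ≤ #{j | countBelow x (x j) < m} := by
  classical
  set L : Finset ι := {j | countBelow x (x j) < m}
  by_contra! hL
  have hLc : Lᶜ.Nonempty := by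
    rw [nonempty_iff_ne_empty, Ne, compl_eq_empty_iff]
    intro hLu
    exact (hL.trans_le hm).ne (hLu ▸ card_univ)
  -- an entry outside `L` of least value only has entries of `L` strictly below it
  obtain ⟨j, hjL, hmin⟩ := Lᶜ.exists_min_image x hLc
  have hbelow : countBelow x (x j) ≤ #L := card_le_card fun i hi => by
    simp only [mem_filter, mem_univ, true_and] at hi
    by_contra hiL
    exact (hmin i (mem_compl.mpr hiL)).not_gt hi
  exact mem_compl.mp hjL (by simpa [L] using hbelow.trans_lt hL)

lemma measurable_countBelow (j : ι) :
    Measurable fun x : ι → ℝ => countBelow x (x j) := by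
  simp only [countBelow, card_filter]
  exact Finset.measurable_sum _ fun i _ => Measurable.ite
    (measurableSet_lt (measurable_pi_apply i) (measurable_pi_apply j))
    measurable_const measurable_const

lemma le_csInf_of_countBelow_lt {β : Type*} [ConditionallyCompleteLinearOrder β] (x : ι → β)
    {y : β} {m : ℕ} (hm : m ≤ Fintype.card ι) (hy : countBelow x y < m) :
    y ≤ sInf {z | m ≤ #{i | x i ≤ z}} := by
  have : Nonempty β := ⟨y⟩
  obtain ⟨b, hb⟩ := (Set.finite_range x).bddAbove
  refine le_csInf ⟨b, ?_⟩ fun z hz => ?_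
  · simpa [filter_true_of_mem fun i _ => hb (Set.mem_range_self i)] using hm
  · by_contra! hzy
    refine (hy.trans_le hz).not_ge (card_le_card fun i hi => ?_)
    simp only [mem_filter, mem_univ, true_and] at hi ⊢
    exact hi.trans_lt hzy

end CountBelow

open Classical in
lemma natCast_mul_measure_univ_le_sum {Ω ι : Type*} [MeasurableSpace Ω] [Fintype ι]
    (μ : Measure Ω) {E : ι → Set Ω} (hE : ∀ j, MeasurableSet (E j)) {m : ℕ}
    (hcover : ∀ ω, m ≤ #{j | ω ∈ E j}) :
    m * μ Set.univ ≤ ∑ j, μ (E j) := by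
  calc m * μ Set.univ = ∫⁻ _, (m : ℝ≥0∞) ∂μ := (lintegral_const _).symm
    _ ≤ ∫⁻ ω, ∑ j, (E j).indicator 1 ω ∂μ := lintegral_mono fun ω => by
        simp only [Set.indicator_apply, Pi.one_apply, sum_boole]
        exact_mod_cast hcover ω
    _ = ∑ j, μ (E j) := by
        rw [lintegral_finsetSum _ fun j _ => measurable_one.indicator (hE j)]
        simp_rw [lintegral_indicator_one (hE _)]

def Exchangeable {Ω ι β : Type*} [MeasurableSpace Ω] [MeasurableSpace β] (μ : Measure Ω)
    (R : ι → Ω → β) : Prop :=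
  ∀ σ : Equiv.Perm ι, μ.map (fun ω i => R (σ i) ω) = μ.map (fun ω i => R i ω)

section ExchangeableRanks

variable {Ω ι : Type*} [MeasurableSpace Ω] [Fintype ι] [DecidableEq ι] {μ : Measure Ω}
  {R : ι → Ω → ℝ}

lemma measure_countBelow_lt_eq (hmeas : ∀ i, Measurable (R i))
    (hexch : Exchangeable μ R) (m : ℕ) (j k : ι) :
    μ {ω | countBelow (R · ω) (R j ω) < m} = μ {ω | countBelow (R · ω) (R k ω) < m} := by
  set A : Set (ι → ℝ) := {x | countBelow x (x k) < m}
  have hA : MeasurableSet A := measurable_countBelow k measurableSet_Iio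
  have hpre :
      {ω | countBelow (R · ω) (R j ω) < m} = (fun ω i => R (Equiv.swap k j i) ω) ⁻¹' A := by
    ext ω
    change _ ↔ countBelow ((R · ω) ∘ Equiv.swap k j) (R (Equiv.swap k j k) ω) < m
    rw [countBelow_comp_perm, Equiv.swap_apply_left]
    rfl
  rw [hpre, ← Measure.map_apply (measurable_pi_lambda _ fun i => hmeas _) hA, hexch,
    Measure.map_apply (measurable_pi_lambda _ hmeas) hA]
  rfl

lemma natCast_div_card_le_measure_countBelow_lt [IsProbabilityMeasure μ]
    (hmeas : ∀ i, Measurable (R i)) (hexch : Exchangeable μ R) {m : ℕ}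
    (hm : m ≤ Fintype.card ι) (k : ι) :
    (m : ℝ≥0∞) / Fintype.card ι ≤ μ {ω | countBelow (R · ω) (R k ω) < m} := by
  have hE : ∀ j, MeasurableSet {ω | countBelow (R · ω) (R j ω) < m} := fun j =>
    (measurable_countBelow j).comp (measurable_pi_lambda _ hmeas) measurableSet_Iio
  have hsum := natCast_mul_measure_univ_le_sum μ hE fun ω => by
    simpa using le_card_countBelow_lt (R · ω) hm
  simp only [measure_univ, mul_one, measure_countBelow_lt_eq hmeas hexch m _ k, sum_const,
    card_univ, nsmul_eq_mul] at hsum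
  exact ENNReal.div_le_of_le_mul' hsum

end ExchangeableRanks

lemma conformal_level_le_div_iff {K : ℕ} (hK : 0 < K) (δ : ℝ) (c : ℕ) :
    (1 + 1 / (K : ℝ)) * (1 - δ) ≤ c / K ↔ ⌈((K : ℝ) + 1) * (1 - δ)⌉₊ ≤ c := by
  have hK' : (0 : ℝ) < K := by exact_mod_cast hK
  have hscale : (1 + 1 / (K : ℝ)) * (1 - δ) * K = (K + 1) * (1 - δ) := by field_simp
  rw [Nat.ceil_le, le_div_iff₀ hK', hscale]

theorem stmt1_general {Ω : Type*} [MeasureSpace Ω] [IsProbabilityMeasure (ℙ : Measure Ω)]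
    (K : ℕ) (hK : 0 < K) (R : Fin (K + 1) → Ω → ℝ)
    (hmeas : ∀ i, Measurable (R i))
    (hexch : ∀ σ : Equiv.Perm (Fin (K + 1)),
      Measure.map (fun ω => fun i => R (σ i) ω) ℙ = Measure.map (fun ω => fun i => R i ω) ℙ)
    (δ : ℝ) (hKδ : ((K : ℝ) + 1) * (1 - δ) ≤ K) :
    ℙ {ω | R 0 ω ≤ sInf {z : ℝ | (1 + 1 / (K : ℝ)) * (1 - δ) ≤
        ((Finset.univ.filter (fun i : Fin K => R i.succ ω ≤ z)).card : ℝ) / K}} ≥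
      ENNReal.ofReal (1 - δ) := by
  set m := ⌈((K : ℝ) + 1) * (1 - δ)⌉₊
  have hmK : m ≤ K := Nat.ceil_le.mpr (by exact_mod_cast hKδ)
  have hlevel : ENNReal.ofReal (1 - δ) ≤ (m : ℝ≥0∞) / Fintype.card (Fin (K + 1)) := by
    rw [Fintype.card_fin, ENNReal.le_div_iff_mul_le (by simp) (by simp),
      ← ENNReal.ofReal_natCast, ← ENNReal.ofReal_natCast, ← ENNReal.ofReal_mul' (by positivity)]
    refine ENNReal.ofReal_le_ofReal ?_
    push_cast
    linarith [Nat.le_ceil (((K : ℝ) + 1) * (1 - δ))]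
  have hquantile : ∀ ω,
      {z : ℝ | (1 + 1 / (K : ℝ)) * (1 - δ) ≤ (#{i : Fin K | R i.succ ω ≤ z} : ℝ) / K}
        = {z | m ≤ #{i : Fin K | R i.succ ω ≤ z}} := fun ω =>
    Set.ext fun z => conformal_level_le_div_iff hK δ _
  refine hlevel.trans ((natCast_div_card_le_measure_countBelow_lt hmeas hexch
    ((Fintype.card_fin _).symm ▸ hmK.trans K.le_succ) 0).trans (measure_mono fun ω hω => ?_))
  rw [Set.mem_ofPred_eq, countBelow_fin_succ] at hω
  rw [Set.mem_ofPred_eq, hquantile]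
  exact le_csInf_of_countBelow_lt ((R · ω) ∘ Fin.succ) ((Fintype.card_fin K).symm ▸ hmK) hω

/-- split conformal prediction coverage for exchangeable scores
`R⁽⁰⁾, …, R⁽ᴷ⁾` (index `0` is the test score, indices `1..K` the calibration
scores): with `C` the `(1+1/K)(1-δ)` empirical quantile of the calibration
scores, `Prob(R⁽⁰⁾ ≤ C) ≥ 1 - δ`. -/
theorem stmt1 {Ω : Type*} [MeasureSpace Ω] [IsProbabilityMeasure (ℙ : Measure Ω)]
    (K : ℕ) (hK : 0 < K) (R : Fin (K + 1) → Ω → ℝ)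
    (hmeas : ∀ i, Measurable (R i))
    (hexch : ∀ σ : Equiv.Perm (Fin (K + 1)),
      Measure.map (fun ω => fun i => R (σ i) ω) ℙ = Measure.map (fun ω => fun i => R i ω) ℙ)
    (δ : ℝ) (hδ : 0 < δ ∧ δ < 1) (hKδ : ((K : ℝ) + 1) * (1 - δ) ≤ K) :
    ℙ {ω | R 0 ω ≤ sInf {z : ℝ | (1 + 1 / (K : ℝ)) * (1 - δ) ≤
        ((Finset.univ.filter (fun i : Fin K => R i.succ ω ≤ z)).card : ℝ) / K}} ≥
      ENNReal.ofReal (1 - δ) :=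
  stmt1_general K hK R hmeas hexch δ hKδ
end

section
/- For the total variation f-divergence given by $f(z)=\tfrac{1}{2}|z-1|$ and a fixed $\epsilon\in(0,1)$, the function $g(\beta):=\inf\{z\in[0,1] : \beta f(z/\beta)+(1-\beta)f((1-z)/(1-\beta))\le\epsilon\}$ satisfies $g(\beta)=\max(0,\beta-\epsilon)$ for all $\beta\in(0,1)$. -/
/-! For `0 < β < 1` both terms of the divergence equal `|z - β| / 2`, so the constraint is just
`|z - β| ≤ ε` and the feasible set is the interval `[max 0 (β - ε), min 1 (β + ε)]`. -/

open Set

lemma mul_half_abs_div_sub_one {b : ℝ} (hb : 0 < b) (x : ℝ) :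
    b * ((1 / 2) * |x / b - 1|) = |x - b| / 2 := by
  rw [div_sub_one hb.ne', abs_div, abs_of_pos hb]
  field_simp

lemma totalVariation_bernoulli_eq_abs_sub {β : ℝ} (hβ₀ : 0 < β) (hβ₁ : β < 1) (z : ℝ) :
    β * ((1 / 2) * |z / β - 1|) + (1 - β) * ((1 / 2) * |(1 - z) / (1 - β) - 1|) = |β - z| := by
  rw [mul_half_abs_div_sub_one hβ₀, mul_half_abs_div_sub_one (sub_pos.mpr hβ₁),
    sub_sub_sub_cancel_left, abs_sub_comm z β]
  ring

/-- for the total-variation f-divergence `f(z) = ½|z-1|` and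
`ε ∈ (0,1)`, the worst-case CDF transformation
`g(β) = inf{z ∈ [0,1] : β f(z/β) + (1-β) f((1-z)/(1-β)) ≤ ε}` equals
`max(0, β - ε)` for all `β ∈ (0,1)`. -/
theorem stmt4 (ε : ℝ) (hε : 0 < ε ∧ ε < 1) (β : ℝ) (hβ : 0 < β ∧ β < 1) :
    sInf {z : ℝ | z ∈ Set.Icc (0 : ℝ) 1 ∧
        β * ((1 / 2) * |z / β - 1|) + (1 - β) * ((1 / 2) * |(1 - z) / (1 - β) - 1|) ≤ ε} =
      max 0 (β - ε) := by
  have hset : {z : ℝ | z ∈ Set.Icc (0 : ℝ) 1 ∧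
        β * ((1 / 2) * |z / β - 1|) + (1 - β) * ((1 / 2) * |(1 - z) / (1 - β) - 1|) ≤ ε} =
      Icc 0 1 ∩ Icc (β - ε) (β + ε) := by
    ext z
    simp only [mem_ofPred_eq, mem_inter_iff,
      totalVariation_bernoulli_eq_abs_sub hβ.1 hβ.2, mem_Icc_iff_abs_le]
  rw [hset, Icc_inter_Icc, csInf_Icc]
  simp only [max_le_iff, le_min_iff]
  exact ⟨⟨zero_le_one, by linarith⟩, by linarith, by linarith⟩
end

section
/- (Soundness of robust semantics.) For any STL formula $\phi$ over discrete-time signals, any signal $x:\mathbb{N}\to\mathbb{R}^n$, and any time $\tau_0$: if $\rho^{\phi}(x,\tau_0)>0$ then $(x,\tau_0)\models\phi$, and if $\rho^{\phi}(x,\tau_0)<0$ then $(x,\tau_0)\not\models\phi$. -/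
open MeasureTheory ProbabilityTheory
open scoped ProbabilityTheory

inductive STL (n : ℕ) : Type where
  | tt : STL n
  | pred : ((Fin n → ℝ) → ℝ) → STL n
  | neg : STL n → STL n
  | and : STL n → STL n → STL n
  | or : STL n → STL n → STL n
  | untl : Finset ℕ → STL n → STL n → STL n

noncomputable def robust {n : ℕ} (x : ℕ → (Fin n → ℝ)) : STL n → ℕ → EReal
  | .tt, _ => ⊤
  | .pred h, τ => ((h (x τ) : ℝ) : EReal)
  | .neg φ, τ => - robust x φ τ
  | .and φ ψ, τ => min (robust x φ τ) (robust x ψ τ)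
  | .or φ ψ, τ => max (robust x φ τ) (robust x ψ τ)
  | .untl I φ ψ, τ =>
      I.sup fun d => min (robust x ψ (τ + d))
        ((Finset.Ioo τ (τ + d)).inf fun τ' => robust x φ τ')

def sat {n : ℕ} (x : ℕ → (Fin n → ℝ)) : STL n → ℕ → Prop
  | .tt, _ => True
  | .pred h, τ => 0 ≤ h (x τ)
  | .neg φ, τ => ¬ sat x φ τ
  | .and φ ψ, τ => sat x φ τ ∧ sat x ψ τ
  | .or φ ψ, τ => sat x φ τ ∨ sat x ψ τ
  | .untl I φ ψ, τ => ∃ d ∈ I, sat x ψ (τ + d) ∧ ∀ τ' ∈ Finset.Ioo τ (τ + d), sat x φ τ'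

/-- soundness of STL robust semantics: positive robustness
implies satisfaction and negative robustness implies violation. -/
theorem stmt10 {n : ℕ} (φ : STL n) (x : ℕ → (Fin n → ℝ)) (τ0 : ℕ) :
    (0 < robust x φ τ0 → sat x φ τ0) ∧ (robust x φ τ0 < 0 → ¬ sat x φ τ0) := by
  induction φ generalizing τ0 with
  | tt => simp [robust, sat]
  | pred h =>
      constructor
      · intro hp
        simp only [robust] at hp
        simp only [sat]
        exact_mod_cast le_of_lt hp
      · intro hn hs
        simp only [robust] at hn
        simp only [sat] at hs
        have : (0:EReal) ≤ ((h (x τ0) : ℝ) : EReal) := by exact_mod_cast hs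
        exact absurd hn (not_lt.2 this)
  | neg φ ih =>
      obtain ⟨h1, h2⟩ := ih τ0
      constructor
      · intro hp hs
        simp only [robust] at hp
        have : robust x φ τ0 < 0 := by
          have := EReal.lt_neg_of_lt_neg hp
          simpa using this
        exact (h2 this) hs
      · intro hn
        simp only [robust, neg_neg] at hn ⊢
        have : 0 < robust x φ τ0 := by
          rwa [EReal.neg_lt_comm, neg_zero] at hn
        simp only [sat, not_not]
        exact h1 this
  | and φ ψ ihφ ihψ =>
      constructor
      · intro hp
        simp only [robust, lt_min_iff] at hp
        exact ⟨(ihφ τ0).1 hp.1, (ihψ τ0).1 hp.2⟩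
      · intro hn hs
        simp only [robust, min_lt_iff] at hn
        rcases hn with h | h
        · exact (ihφ τ0).2 h hs.1
        · exact (ihψ τ0).2 h hs.2
  | or φ ψ ihφ ihψ =>
      constructor
      · intro hp
        simp only [robust, lt_max_iff] at hp
        rcases hp with h | h
        · exact Or.inl ((ihφ τ0).1 h)
        · exact Or.inr ((ihψ τ0).1 h)
      · intro hn hs
        simp only [robust, max_lt_iff] at hn
        rcases hs with h | h
        · exact (ihφ τ0).2 hn.1 h
        · exact (ihψ τ0).2 hn.2 h
  | untl I φ ψ ihφ ihψ =>
      constructor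
      · intro hp
        simp only [robust] at hp
        rw [Finset.lt_sup_iff] at hp
        obtain ⟨d, hd, hlt⟩ := hp
        rw [lt_min_iff] at hlt
        refine ⟨d, hd, (ihψ _).1 hlt.1, ?_⟩
        intro τ' hτ'
        have := hlt.2
        rw [Finset.lt_inf_iff (by simp : (0:EReal) < ⊤)] at this
        exact (ihφ τ').1 (this τ' hτ')
      · intro hn hs
        simp only [robust] at hn
        obtain ⟨d, hd, hsψ, hall⟩ := hs
        have : (min (robust x ψ (τ0 + d))
            ((Finset.Ioo τ0 (τ0 + d)).inf fun τ' => robust x φ τ')) < 0 := by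
          refine lt_of_le_of_lt ?_ hn
          exact Finset.le_sup (f := fun d => min (robust x ψ (τ0 + d))
            ((Finset.Ioo τ0 (τ0 + d)).inf fun τ' => robust x φ τ')) hd
        rw [min_lt_iff] at this
        rcases this with h | h
        · exact (ihψ _).2 h hsψ
        · rw [Finset.inf_lt_iff] at h
          obtain ⟨τ', hτ', hlt⟩ := h
          exact (ihφ τ').2 hlt (hall τ' hτ')
end

section
/- (Combination of Variant II with Theorem 2, end-to-end abstract statement.) Let $\phi$ be an STL formula in positive normal form over a finite time horizon, with finite set $\mathcal{P}$ of (predicate, time) pairs. Let $X$ be a random signal, and for each $(\pi,\tau)\in\mathcal{P}$ let $b_{\pi,\tau}\in\mathbb{R}$ and $\alpha_{\pi,\tau}>0$ be constants (predicted robustness values and normalizers). If $\mathrm{Prob}\big(\max_{(\pi,\tau)\in\mathcal{P}}(b_{\pi,\tau}-\rho^{\pi}(X,\tau))/\alpha_{\pi,\tau}\le\tilde{C}\big)\ge1-\delta$, then $\mathrm{Prob}\big(\rho^{\phi}(X,\tau_0)\ge \bar\rho\big)\ge1-\delta$, where $\bar\rho$ is the value obtained by evaluating the robust semantics recursion with each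 predicate value at $(\pi,\tau)\in\mathcal{P}$ replaced by the constant $b_{\pi,\tau}-\tilde{C}\alpha_{\pi,\tau}$. -/
open MeasureTheory ProbabilityTheory
open scoped ProbabilityTheory

def NegFree {n : ℕ} : STL n → Prop
  | .tt => True
  | .pred _ => True
  | .neg _ => False
  | .and φ ψ => NegFree φ ∧ NegFree ψ
  | .or φ ψ => NegFree φ ∧ NegFree ψ
  | .untl _ φ ψ => NegFree φ ∧ NegFree ψ

def Preds {n : ℕ} : STL n → Set ((Fin n → ℝ) → ℝ)
  | .tt => ∅
  | .pred h => {h}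
  | .neg φ => Preds φ
  | .and φ ψ => Preds φ ∪ Preds ψ
  | .or φ ψ => Preds φ ∪ Preds ψ
  | .untl _ φ ψ => Preds φ ∪ Preds ψ

noncomputable def robustWith {n : ℕ} (ℓ : ((Fin n → ℝ) → ℝ) → ℕ → EReal) : STL n → ℕ → EReal
  | .tt, _ => ⊤
  | .pred h, τ => ℓ h τ
  | .neg φ, τ => - robustWith ℓ φ τ
  | .and φ ψ, τ => min (robustWith ℓ φ τ) (robustWith ℓ ψ τ)
  | .or φ ψ, τ => max (robustWith ℓ φ τ) (robustWith ℓ ψ τ)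
  | .untl I φ ψ, τ =>
      I.sup fun d => min (robustWith ℓ ψ (τ + d))
        ((Finset.Ioo τ (τ + d)).inf fun τ' => robustWith ℓ φ τ')

theorem robustWith_mono {n : ℕ} (ℓ ℓ' : ((Fin n → ℝ) → ℝ) → ℕ → EReal)
    (φ : STL n) (hφ : NegFree φ)
    (h : ∀ hp ∈ Preds φ, ∀ τ, ℓ hp τ ≤ ℓ' hp τ) (τ : ℕ) :
    robustWith ℓ φ τ ≤ robustWith ℓ' φ τ := by
  induction φ generalizing τ with
  | tt => simp [robustWith]
  | pred p => exact h p (by simp [Preds]) τ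
  | neg ψ ih => exact absurd hφ (by simp [NegFree])
  | and ψ χ ih1 ih2 =>
      have h1 := ih1 hφ.1 (fun hp hm => h hp (Or.inl hm))
      have h2 := ih2 hφ.2 (fun hp hm => h hp (Or.inr hm))
      exact min_le_min (h1 τ) (h2 τ)
  | or ψ χ ih1 ih2 =>
      have h1 := ih1 hφ.1 (fun hp hm => h hp (Or.inl hm))
      have h2 := ih2 hφ.2 (fun hp hm => h hp (Or.inr hm))
      exact max_le_max (h1 τ) (h2 τ)
  | untl I ψ χ ih1 ih2 =>
      have h1 := ih1 hφ.1 (fun hp hm => h hp (Or.inl hm))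
      have h2 := ih2 hφ.2 (fun hp hm => h hp (Or.inr hm))
      refine Finset.sup_mono_fun (fun d _ => ?_)
      exact min_le_min (h2 (τ + d)) (Finset.inf_mono_fun (fun τ' _ => h1 τ'))

theorem robust_eq_robustWith {n : ℕ} (x : ℕ → (Fin n → ℝ)) (φ : STL n) (τ : ℕ) :
    robust x φ τ = robustWith (fun hp τ => ((hp (x τ) : ℝ) : EReal)) φ τ := by
  induction φ generalizing τ with
  | tt => rfl
  | pred p => rfl
  | neg ψ ih => simp [robust, robustWith, ih]
  | and ψ χ ih1 ih2 => simp [robust, robustWith, ih1, ih2]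
  | or ψ χ ih1 ih2 => simp [robust, robustWith, ih1, ih2]
  | untl I ψ χ ih1 ih2 => simp [robust, robustWith, ih1, ih2]

/-- Variant II combined with Theorem 2, end-to-end: for a
negation-free STL formula, if with probability at least `1-δ` all normalized
predicate-level prediction errors `(b_{π,τ} - ρ^π(X,τ))/α_{π,τ}` over the
(predicate, future-time) pairs are at most `C̃`, then with probability at
least `1-δ` the true robustness is lower bounded by the robust semantics
recursion with each future predicate value replaced by `b_{π,τ} - C̃ α_{π,τ}`. -/
theorem stmt19 {Ω : Type*} [MeasureSpace Ω] [IsProbabilityMeasure (volume : Measure Ω)]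
    {n : ℕ} (φ : STL n) (hφ : NegFree φ) (t τ0 : ℕ)
    (X : Ω → ℕ → (Fin n → ℝ))
    (b α : ((Fin n → ℝ) → ℝ) → ℕ → ℝ) (hα : ∀ hp τ, 0 < α hp τ)
    (Ctil δ : ℝ)
    (hmax : ℙ {ω | ∀ hp ∈ Preds φ, ∀ τ : ℕ, t < τ →
        (b hp τ - hp (X ω τ)) / α hp τ ≤ Ctil} ≥ ENNReal.ofReal (1 - δ)) :
    ℙ {ω | robustWith
        (fun hp τ => if τ ≤ t then ((hp (X ω τ) : ℝ) : EReal)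
          else ((b hp τ - Ctil * α hp τ : ℝ) : EReal)) φ τ0 ≤
        robust (X ω) φ τ0} ≥ ENNReal.ofReal (1 - δ) := by
  refine le_trans hmax (measure_mono ?_)
  intro ω hω
  simp only [Set.mem_setOf_eq] at hω ⊢
  rw [robust_eq_robustWith]
  refine robustWith_mono _ _ φ hφ (fun hp hm τ => ?_) τ0
  by_cases hτ : τ ≤ t
  · simp [hτ]
  · simp only [hτ, if_false]
    have h1 := hω hp hm τ (lt_of_not_ge hτ)
    have h2 := (div_le_iff₀ (hα hp τ)).mp h1
    have : b hp τ - Ctil * α hp τ ≤ hp (X ω τ) := by linarith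
    exact_mod_cast EReal.coe_le_coe_iff.mpr this
end
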